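/- Let r ≥ 1 and let z_1, …, z_r be distinct real numbers. Define κ : ℝ → ℝ by κ(t) = sin(t)/(2t) for t ≠ 0 and κ(0) = 1/2, and η : ℝ → ℝ by η(t) = (1 − cos t)/(2t) for t ≠ 0 and η(0) = 0. Then the 2r × 2r real symmetric matrix Σ indexed by pairs (T, i) with T ∈ {Z, W} and i ∈ {1,…,r}, with entries Σ_{(Z,i),(Z,j)} = Σ_{(W,i),(W,j)} = κ(z_i − z_j) and Σ_{(Z,i),(W,j)} = η(z_i − z_j), is positive definite. -/

import Mathlib

/-!
With `e_j(s) = exp(i z_j s)`, attach to `Z(z_j)` the curve `e_j` and to `W(z_j)` the curve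
`i e_j` in `ℂ = ℝ²`. Since `κ(t) = ½ ∫₀¹ cos(ts) ds` and `η(t) = ½ ∫₀¹ sin(ts) ds`, the matrix
`Σ` is one half of the Gram matrix of these curves in `L²([0,1]; ℂ)`, so its quadratic form at
`x` is `½ ∫₀¹ |∑_j (x_{Z,j} + i x_{W,j}) e_j(s)|² ds`. This vanishes only if the exponential
polynomial `∑_j c_j e^{i z_j s}` vanishes on `[0,1]`; differentiating `k` times and evaluating at
an interior point gives `∑_j c_j e^{i z_j s₀} (i z_j)^k = 0` for all `k`, and the Vandermonde
matrix of the distinct nodes `i z_j` forces `c = 0`.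
-/

open Real

/-- `κ(t) = sin(t)/(2t)` for `t ≠ 0`, `κ(0) = 1/2`. -/
noncomputable def kappaFun (t : ℝ) : ℝ := if t = 0 then 1 / 2 else Real.sin t / (2 * t)

/-- `η(t) = (1 - cos t)/(2t)` for `t ≠ 0`, `η(0) = 0`. -/
noncomputable def etaFun (t : ℝ) : ℝ := if t = 0 then 0 else (1 - Real.cos t) / (2 * t)

open Matrix

lemma kappaFun_eq_integral (t : ℝ) : kappaFun t = (∫ s in (0 : ℝ)..1, Real.cos (t * s)) / 2 := by
  rcases eq_or_ne t 0 with rfl | ht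
  · simp [kappaFun]
  · rw [kappaFun, if_neg ht, intervalIntegral.integral_comp_mul_left (fun s => Real.cos s) ht,
      integral_cos]
    simp only [mul_one, mul_zero, sin_zero, sub_zero, smul_eq_mul]
    field_simp

lemma etaFun_eq_integral (t : ℝ) : etaFun t = (∫ s in (0 : ℝ)..1, Real.sin (t * s)) / 2 := by
  rcases eq_or_ne t 0 with rfl | ht
  · simp [etaFun]
  · rw [etaFun, if_neg ht, intervalIntegral.integral_comp_mul_left (fun s => Real.sin s) ht,
      integral_sin]
    simp only [mul_zero, cos_zero, mul_one, smul_eq_mul]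
    field_simp

section IntervalGram

variable {ι E : Type*} [Fintype ι] [NormedAddCommGroup E] [InnerProductSpace ℝ E]

noncomputable def intervalGram (a b : ℝ) (g : ι → ℝ → E) : Matrix ι ι ℝ :=
  Matrix.of fun p q => ∫ s in a..b, inner ℝ (g p s) (g q s)

omit [Fintype ι] in
lemma intervalGram_isHermitian (a b : ℝ) (g : ι → ℝ → E) : (intervalGram a b g).IsHermitian := by
  ext p q
  simp [intervalGram, real_inner_comm]

lemma dotProduct_intervalGram_mulVec {g : ι → ℝ → E} (hg : ∀ p, Continuous (g p)) (a b : ℝ)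
    (x : ι → ℝ) : x ⬝ᵥ intervalGram a b g *ᵥ x = ∫ s in a..b, ‖∑ p, x p • g p s‖ ^ 2 := by
  have hcont : ∀ p q, Continuous fun s => x p * (x q * inner ℝ (g p s) (g q s)) := by
    fun_prop
  simp_rw [← real_inner_self_eq_norm_sq, sum_inner, inner_sum, real_inner_smul_left,
    real_inner_smul_right]
  rw [intervalIntegral.integral_finsetSum fun p _ =>
    (continuous_finsetSum _ fun q _ => hcont p q).intervalIntegrable _ _]
  simp_rw [intervalIntegral.integral_finsetSum fun q _ => (hcont _ q).intervalIntegrable _ _,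
    intervalIntegral.integral_const_mul, dotProduct, Matrix.mulVec, dotProduct, Finset.mul_sum]
  refine Fintype.sum_congr _ _ fun p => Fintype.sum_congr _ _ fun q => ?_
  rw [intervalGram, of_apply]
  ring

lemma intervalGram_posDef {a b : ℝ} (hab : a < b) {g : ι → ℝ → E} (hg : ∀ p, Continuous (g p))
    (hindep : ∀ x : ι → ℝ, (∀ s ∈ Set.Icc a b, ∑ p, x p • g p s = 0) → x = 0) :
    (intervalGram a b g).PosDef := by
  refine Matrix.posDef_iff_dotProduct_mulVec.2 ⟨intervalGram_isHermitian a b g, fun x hx => ?_⟩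
  obtain ⟨s, hs, hne⟩ : ∃ s ∈ Set.Icc a b, ∑ p, x p • g p s ≠ 0 := by
    by_contra! h
    exact hx (hindep x h)
  rw [star_trivial, dotProduct_intervalGram_mulVec hg]
  refine intervalIntegral.integral_pos hab (by fun_prop) (fun _ _ => by positivity) ⟨s, hs, ?_⟩
  positivity

end IntervalGram

section ExponentialPolynomial

variable {ι : Type*} [Fintype ι]

lemma hasDerivAt_sum_mul_cexp (c w : ι → ℂ) (s : ℝ) :
    HasDerivAt (fun t : ℝ => ∑ j, c j * Complex.exp (w j * t))
      (∑ j, c j * w j * Complex.exp (w j * s)) s := by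
  refine HasDerivAt.fun_sum fun j _ => ?_
  have := ((Complex.ofRealCLM.hasDerivAt (x := s)).const_mul (w j)).cexp.const_mul (c j)
  simpa [mul_comm, mul_left_comm, mul_assoc] using this

lemma sum_mul_pow_mul_cexp_eq_zero {c w : ι → ℂ} {U : Set ℝ} (hU : IsOpen U)
    (h : ∀ s ∈ U, ∑ j, c j * Complex.exp (w j * s) = 0) (k : ℕ) :
    ∀ s ∈ U, ∑ j, c j * w j ^ k * Complex.exp (w j * s) = 0 := by
  induction k with
  | zero => simpa using h
  | succ k ih =>
    intro s hs
    have hzero : (fun t : ℝ => ∑ j, c j * w j ^ k * Complex.exp (w j * t)) =ᶠ[nhds s] 0 :=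
      Filter.eventuallyEq_of_mem (hU.mem_nhds hs) ih
    simpa [pow_succ, mul_assoc] using
      (hasDerivAt_sum_mul_cexp (fun j => c j * w j ^ k) w s).deriv.symm.trans hzero.deriv_eq

lemma eq_zero_of_sum_mul_cexp_eq_zero {n : ℕ} {w : Fin n → ℂ} (hw : Function.Injective w)
    {c : Fin n → ℂ} {U : Set ℝ} (hU : IsOpen U) {s₀ : ℝ} (hs₀ : s₀ ∈ U)
    (h : ∀ s ∈ U, ∑ j, c j * Complex.exp (w j * s) = 0) : c = 0 := by
  have hv := eq_zero_of_forall_pow_sum_mul_pow_eq_zero hw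
    (v := fun j => c j * Complex.exp (w j * s₀)) fun k => by
      simpa [mul_right_comm] using sum_mul_pow_mul_cexp_eq_zero hU h k s₀ hs₀
  funext j
  simpa using congrFun hv j

end ExponentialPolynomial

section ZWCurve

variable {r : ℕ}

noncomputable def zwCurve (z : Fin r → ℝ) (p : Bool × Fin r) (s : ℝ) : ℂ :=
  (if p.1 then Complex.I else 1) * Complex.exp (z p.2 * Complex.I * s)

lemma continuous_zwCurve (z : Fin r → ℝ) (p : Bool × Fin r) : Continuous (zwCurve z p) := by
  unfold zwCurve
  fun_prop

lemma zwCurve_eq (z : Fin r → ℝ) (p : Bool × Fin r) (s : ℝ) :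
    zwCurve z p s = (if p.1 then Complex.I else 1) *
      (Real.cos (z p.2 * s) + Real.sin (z p.2 * s) * Complex.I) := by
  push_cast
  rw [zwCurve, ← Complex.exp_mul_I]
  ring_nf

lemma inner_zwCurve_same (z : Fin r → ℝ) (b : Bool) (i j : Fin r) (s : ℝ) :
    inner ℝ (zwCurve z (b, i) s) (zwCurve z (b, j) s) = Real.cos ((z i - z j) * s) := by
  rw [sub_mul, Real.cos_sub]
  cases b <;>
    simp only [zwCurve_eq, Complex.inner, map_add, map_mul, map_one, Complex.conj_ofReal,
      Complex.conj_I, Complex.mul_re, Complex.mul_im, Complex.add_re, Complex.add_im,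
      Complex.neg_re, Complex.neg_im, Complex.ofReal_re, Complex.ofReal_im, Complex.I_re,
      Complex.I_im, Complex.one_re, Complex.one_im, if_true, if_false, Bool.false_eq_true] <;>
    ring

lemma inner_zwCurve_false_true (z : Fin r → ℝ) (i j : Fin r) (s : ℝ) :
    inner ℝ (zwCurve z (false, i) s) (zwCurve z (true, j) s) = Real.sin ((z i - z j) * s) := by
  rw [sub_mul, Real.sin_sub]
  simp only [zwCurve_eq, Complex.inner, map_add, map_mul, map_one, Complex.conj_ofReal,
    Complex.conj_I, Complex.mul_re, Complex.mul_im, Complex.add_re, Complex.add_im,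
    Complex.neg_re, Complex.neg_im, Complex.ofReal_re, Complex.ofReal_im, Complex.I_re,
    Complex.I_im, Complex.one_re, Complex.one_im, if_true, if_false, Bool.false_eq_true]
  ring

lemma inner_zwCurve_true_false (z : Fin r → ℝ) (i j : Fin r) (s : ℝ) :
    inner ℝ (zwCurve z (true, i) s) (zwCurve z (false, j) s) = Real.sin ((z j - z i) * s) := by
  rw [real_inner_comm, inner_zwCurve_false_true]

lemma sum_smul_zwCurve (z : Fin r → ℝ) (x : Bool × Fin r → ℝ) (s : ℝ) :
    ∑ p, x p • zwCurve z p s =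
      ∑ j, (x (false, j) + x (true, j) * Complex.I) * Complex.exp (z j * Complex.I * s) := by
  simp only [Fintype.sum_prod_type, Fintype.sum_bool, zwCurve, Complex.real_smul, if_true,
    Bool.false_eq_true, if_false, ← Finset.sum_add_distrib]
  refine Fintype.sum_congr _ _ fun j => ?_
  ring

lemma eq_zero_of_sum_smul_zwCurve_eq_zero {z : Fin r → ℝ} (hz : Function.Injective z)
    {x : Bool × Fin r → ℝ} (h : ∀ s ∈ Set.Icc (0 : ℝ) 1, ∑ p, x p • zwCurve z p s = 0) :
    x = 0 := by
  have hinj : Function.Injective fun j => (z j : ℂ) * Complex.I := fun i j hij =>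
    hz (Complex.ofReal_injective (mul_right_cancel₀ Complex.I_ne_zero hij))
  have hc := eq_zero_of_sum_mul_cexp_eq_zero hinj isOpen_Ioo
    (Set.mem_Ioo.2 ⟨one_half_pos, one_half_lt_one⟩)
    fun s hs => (sum_smul_zwCurve z x s).symm.trans (h s (Set.Ioo_subset_Icc_self hs))
  funext ⟨b, j⟩
  obtain ⟨hZ, hW⟩ : x (false, j) = 0 ∧ x (true, j) = 0 := by
    simpa [Complex.ext_iff] using congrFun hc j
  cases b
  exacts [hZ, hW]

end ZWCurve

theorem statement13 (r : ℕ) (z : Fin r → ℝ) (hz : Function.Injective z) :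
    Matrix.PosDef (Matrix.of fun p q : Bool × Fin r =>
      match p.1, q.1 with
      | false, false => kappaFun (z p.2 - z q.2)
      | true, true => kappaFun (z p.2 - z q.2)
      | false, true => etaFun (z p.2 - z q.2)
      | true, false => etaFun (z q.2 - z p.2)) := by
  convert (intervalGram_posDef one_pos (continuous_zwCurve z)
    fun _ => eq_zero_of_sum_smul_zwCurve_eq_zero hz).smul (one_half_pos (α := ℝ)) using 1
  ext ⟨b, i⟩ ⟨b', j⟩
  cases b <;> cases b' <;>
    simp only [of_apply, intervalGram, Matrix.smul_apply, smul_eq_mul, inner_zwCurve_same,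
      inner_zwCurve_false_true, inner_zwCurve_true_false, kappaFun_eq_integral,
      etaFun_eq_integral] <;>
    ring
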